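/- arXiv:0805.1349 — 2 statements merged into one kernel-verified Lean document; each statement's English description precedes it below -/
import Mathlib

section
/- Let V be a real square matrix on a finite set E, diagonalizable with a simple positive eigenvalue λ strictly greater in modulus than all other eigenvalues, with right eigenvector R and left eigenvector L normalized by ∑_i L_i R_i = 1. Then for all x, y ∈ E, (V^N)_{y,x}/λ^N → R_y · L_x as N → ∞, and trace(V^N)/λ^N → 1. -/
open Finset Polynomial Filter

/-- For a diagonalizable matrix `V` with simple, strictly dominant positive eigenvalue `lam`,
right eigenvector `R` and left eigenvector `L` normalized by `∑ L_i R_i = 1`, we have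
`(V^N)_{y,x}/lam^N → R_y·L_x` and `trace(V^N)/lam^N → 1` as `N → ∞`. -/
theorem dominant_eigenvalue_power_limit {E : Type*} [Fintype E] [DecidableEq E]
    (V : Matrix E E ℝ)
    (hdiag : ∃ (P : Matrix E E ℂ) (D : E → ℂ), IsUnit P.det ∧
      V.map (algebraMap ℝ ℂ) = P * Matrix.diagonal D * P⁻¹)
    (lam : ℝ) (hlam : 0 < lam)
    (R L : E → ℝ)
    (hR : V.mulVec R = lam • R) (hL : V.vecMul L = lam • L)
    (hnorm : ∑ i, L i * R i = 1)
    (hsimple : (V.charpoly.map (algebraMap ℝ ℂ)).rootMultiplicity (lam : ℂ) = 1)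
    (hdom : ∀ μ : ℂ, (V.charpoly.map (algebraMap ℝ ℂ)).IsRoot μ → μ ≠ (lam : ℂ) →
      ‖μ‖ < lam) :
    (∀ x y : E, Tendsto (fun N : ℕ => (V ^ N) y x / lam ^ N) atTop (nhds (R y * L x))) ∧
      Tendsto (fun N : ℕ => (V ^ N).trace / lam ^ N) atTop (nhds 1) := by
  obtain ⟨P, D, hPdet, hV⟩ := hdiag
  have hlamne : lam ≠ 0 := ne_of_gt hlam
  have hlamC : (lam : ℂ) ≠ 0 := by exact_mod_cast hlamne
  have hPP : P * P⁻¹ = 1 := Matrix.mul_nonsing_inv P hPdet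
  have hPP' : P⁻¹ * P = 1 := Matrix.nonsing_inv_mul P hPdet
  -- characteristic polynomial of the conjugated matrix
  have hcharconj : (P * Matrix.diagonal D * P⁻¹).charpoly = (Matrix.diagonal D).charpoly := by
    unfold Matrix.charpoly
    have hmapinv : ((C : ℂ →+* ℂ[X]).mapMatrix P)⁻¹ = (C : ℂ →+* ℂ[X]).mapMatrix P⁻¹ :=
      Matrix.inv_eq_right_inv (by rw [← map_mul, hPP, map_one])
    have hc : Matrix.charmatrix (P * Matrix.diagonal D * P⁻¹) =
        (C : ℂ →+* ℂ[X]).mapMatrix P * Matrix.charmatrix (Matrix.diagonal D) *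
          ((C : ℂ →+* ℂ[X]).mapMatrix P)⁻¹ := by
      rw [hmapinv]
      unfold Matrix.charmatrix
      rw [Matrix.mul_sub, Matrix.sub_mul, map_mul, map_mul]
      congr 1
      have hcomm := Matrix.scalar_commute (n := E) (X : ℂ[X]) (fun r' => mul_comm _ _)
        ((C : ℂ →+* ℂ[X]).mapMatrix P)
      rw [← hcomm.eq, Matrix.mul_assoc, ← map_mul, hPP, map_one, mul_one]
    rw [hc]
    have hu : IsUnit ((C : ℂ →+* ℂ[X]).mapMatrix P) := by
      rw [Matrix.isUnit_iff_isUnit_det, ← RingHom.map_det]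
      exact (Polynomial.isUnit_C).mpr hPdet
    exact Matrix.det_conj hu _
  have hchardiag : (Matrix.diagonal D).charpoly = ∏ k, (X - C (D k)) := by
    unfold Matrix.charpoly
    have : Matrix.charmatrix (Matrix.diagonal D) =
        Matrix.diagonal (fun k => (X : ℂ[X]) - C (D k)) := by
      ext i j
      by_cases h : i = j
      · subst h; simp [Matrix.charmatrix_apply, Matrix.diagonal]
      · simp [Matrix.charmatrix_apply_ne _ _ _ h, Matrix.diagonal_apply_ne _ h]
    rw [this, Matrix.det_diagonal]
  have hcharV : V.charpoly.map (algebraMap ℝ ℂ) = ∏ k, (X - C (D k)) := by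
    rw [← Matrix.charpoly_map, hV, hcharconj, hchardiag]
  -- roots of the characteristic polynomial
  have hroots : (V.charpoly.map (algebraMap ℝ ℂ)).roots = Finset.univ.val.map D := by
    rw [hcharV]
    have h1 : ∏ k, ((X : ℂ[X]) - C (D k)) =
        ((Finset.univ.val.map D).map fun a => X - C a).prod := by
      rw [Multiset.map_map]; rfl
    rw [h1, roots_multiset_prod_X_sub_C]
  -- the unique index with eigenvalue lam
  have hcount : (Finset.univ.val.map D).count (lam : ℂ) = 1 := by
    rw [← Polynomial.count_roots, hroots] at hsimple; exact hsimple
  have hcard : (Finset.univ.filter (fun k => D k = (lam : ℂ))).card = 1 := by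
    rw [Multiset.count_map] at hcount
    rw [← hcount, Finset.card, Finset.filter_val]
    congr 1
    exact Multiset.filter_congr (fun k _ => by constructor <;> exact Eq.symm)
  obtain ⟨k₀, hk₀⟩ := Finset.card_eq_one.mp hcard
  have hDk₀ : D k₀ = (lam : ℂ) := by
    have h := hk₀ ▸ Finset.mem_singleton_self k₀
    exact (Finset.mem_filter.mp h).2
  have hDne : ∀ k, k ≠ k₀ → D k ≠ (lam : ℂ) := by
    intro k hk hD
    exact hk (Finset.mem_singleton.mp (hk₀ ▸ Finset.mem_filter.mpr ⟨Finset.mem_univ k, hD⟩))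
  have hnormlt : ∀ k, k ≠ k₀ → ‖D k / (lam : ℂ)‖ < 1 := by
    intro k hk
    have hroot : (V.charpoly.map (algebraMap ℝ ℂ)).IsRoot (D k) := by
      rw [hcharV]
      simp only [Polynomial.IsRoot, Polynomial.eval_prod]
      exact Finset.prod_eq_zero (Finset.mem_univ k) (by simp)
    have habs := hdom (D k) hroot (hDne k hk)
    have hnl : ‖(lam : ℂ)‖ = lam := by
      rw [Complex.norm_real, Real.norm_of_nonneg hlam.le]
    rw [norm_div, hnl, div_lt_one hlam]
    exact habs
  -- powers of V, complexified
  have hconjpow : ∀ N : ℕ, (P * Matrix.diagonal D * P⁻¹) ^ N =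
      P * Matrix.diagonal (fun k => D k ^ N) * P⁻¹ := by
    intro N
    induction N with
    | zero => simp [pow_zero, Matrix.diagonal_one, hPP]
    | succ n ih =>
      rw [pow_succ, ih, Matrix.mul_assoc (P * Matrix.diagonal fun k => D k ^ n) P⁻¹,
        ← Matrix.mul_assoc P⁻¹ (P * Matrix.diagonal D) P⁻¹,
        ← Matrix.mul_assoc P⁻¹ P (Matrix.diagonal D), hPP', Matrix.one_mul,
        ← Matrix.mul_assoc, Matrix.mul_assoc P (Matrix.diagonal fun k => D k ^ n),
        Matrix.diagonal_mul_diagonal]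
      have hfun : (fun i => D i ^ n * D i) = fun k => D k ^ (n + 1) := by
        funext k; rw [pow_succ]
      rw [hfun]
  have hentry : ∀ (N : ℕ) (x y : E),
      (((V ^ N) y x : ℝ) : ℂ) = ∑ k, P y k * D k ^ N * P⁻¹ k x := by
    intro N x y
    have h1 : (((V ^ N) y x : ℝ) : ℂ) = ((algebraMap ℝ ℂ).mapMatrix (V ^ N)) y x := rfl
    rw [h1, map_pow, RingHom.mapMatrix_apply, hV, hconjpow N, Matrix.mul_apply]
    exact Finset.sum_congr rfl fun k _ => by rw [Matrix.mul_diagonal]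
  -- complex-valued convergence of the rescaled entries
  set u : E → ℂ := fun i => P i k₀ with hu_def
  set w : E → ℂ := fun i => P⁻¹ k₀ i with hw_def
  have htendC : ∀ x y : E, Tendsto (fun N : ℕ => (((V ^ N) y x : ℝ) : ℂ) / (lam : ℂ) ^ N)
      atTop (nhds (u y * w x)) := by
    intro x y
    have heq : ∀ N : ℕ, (((V ^ N) y x : ℝ) : ℂ) / (lam : ℂ) ^ N =
        ∑ k, P y k * (D k / (lam : ℂ)) ^ N * P⁻¹ k x := by
      intro N
      rw [hentry N x y, Finset.sum_div]
      exact Finset.sum_congr rfl fun k _ => by rw [div_pow]; ring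
    simp only [heq]
    have h2 : Tendsto (fun N : ℕ => ∑ k, P y k * (D k / (lam : ℂ)) ^ N * P⁻¹ k x)
        atTop (nhds (∑ k, if k = k₀ then u y * w x else 0)) := by
      refine tendsto_finset_sum _ fun k _ => ?_
      by_cases hk : k = k₀
      · subst hk
        simp only [if_pos rfl]
        have : ∀ N : ℕ, P y k * (D k / (lam : ℂ)) ^ N * P⁻¹ k x = u y * w x := by
          intro N
          rw [hDk₀, div_self hlamC, one_pow, mul_one]
        simp only [this]
        exact tendsto_const_nhds
      · simp only [if_neg hk]
        have h3 : Tendsto (fun N : ℕ => (D k / (lam : ℂ)) ^ N) atTop (nhds 0) :=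
          tendsto_pow_atTop_nhds_zero_of_norm_lt_one (hnormlt k hk)
        have h4 := (h3.const_mul (P y k)).mul_const (P⁻¹ k x)
        simpa using h4
    simpa [Finset.sum_ite_eq'] using h2
  -- iterated eigenvector equations
  have hRN : ∀ N : ℕ, (V ^ N).mulVec R = (lam ^ N) • R := by
    intro N
    induction N with
    | zero => simp [Matrix.one_mulVec]
    | succ n ih =>
      rw [pow_succ, ← Matrix.mulVec_mulVec, hR, Matrix.mulVec_smul, ih, smul_smul, ← pow_succ']
  have hLN : ∀ N : ℕ, Matrix.vecMul L (V ^ N) = (lam ^ N) • L := by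
    intro N
    induction N with
    | zero => simp [Matrix.vecMul_one]
    | succ n ih =>
      rw [pow_succ', ← Matrix.vecMul_vecMul, hL, Matrix.smul_vecMul, ih, smul_smul, ← pow_succ']
  -- the key identification of u, w with R, L
  set S : ℂ := ∑ x, w x * (R x : ℂ) with hS_def
  set T : ℂ := ∑ y, (L y : ℂ) * u y with hT_def
  have key1 : ∀ y : E, u y * S = (R y : ℂ) := by
    intro y
    have h1 : Tendsto (fun N : ℕ => ∑ x, (((V ^ N) y x : ℝ) : ℂ) / (lam : ℂ) ^ N * (R x : ℂ))
        atTop (nhds (∑ x, u y * w x * (R x : ℂ))) :=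
      tendsto_finset_sum _ fun x _ => (htendC x y).mul_const _
    have h2 : ∀ N : ℕ, ∑ x, (((V ^ N) y x : ℝ) : ℂ) / (lam : ℂ) ^ N * (R x : ℂ) = (R y : ℂ) := by
      intro N
      have h3 : ∑ x, (V ^ N) y x * R x = lam ^ N * R y := by
        have h4 := congrFun (hRN N) y
        simpa [Matrix.mulVec, dotProduct] using h4
      have h5 : ∑ x, (((V ^ N) y x : ℝ) : ℂ) / (lam : ℂ) ^ N * (R x : ℂ) =
          ((∑ x, (V ^ N) y x * R x : ℝ) : ℂ) / (lam : ℂ) ^ N := by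
        push_cast
        rw [Finset.sum_div]
        exact Finset.sum_congr rfl fun x _ => by ring
      rw [h5, h3]
      push_cast
      field_simp
    have h6 : Tendsto (fun N : ℕ => ∑ x, (((V ^ N) y x : ℝ) : ℂ) / (lam : ℂ) ^ N * (R x : ℂ))
        atTop (nhds (R y : ℂ)) := by
      simp only [h2]; exact tendsto_const_nhds
    have h7 := tendsto_nhds_unique h1 h6
    rw [← h7, hS_def, Finset.mul_sum]
    exact Finset.sum_congr rfl fun x _ => by ring
  have key2 : ∀ x : E, T * w x = (L x : ℂ) := by
    intro x
    have h1 : Tendsto (fun N : ℕ => ∑ y, (L y : ℂ) * ((((V ^ N) y x : ℝ) : ℂ) / (lam : ℂ) ^ N))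
        atTop (nhds (∑ y, (L y : ℂ) * (u y * w x))) :=
      tendsto_finset_sum _ fun y _ => (htendC x y).const_mul _
    have h2 : ∀ N : ℕ, ∑ y, (L y : ℂ) * ((((V ^ N) y x : ℝ) : ℂ) / (lam : ℂ) ^ N) = (L x : ℂ) := by
      intro N
      have h3 : ∑ y, L y * (V ^ N) y x = lam ^ N * L x := by
        have h4 := congrFun (hLN N) x
        simpa [Matrix.vecMul, dotProduct] using h4
      have h5 : ∑ y, (L y : ℂ) * ((((V ^ N) y x : ℝ) : ℂ) / (lam : ℂ) ^ N) =
          ((∑ y, L y * (V ^ N) y x : ℝ) : ℂ) / (lam : ℂ) ^ N := by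
        push_cast
        rw [Finset.sum_div]
        exact Finset.sum_congr rfl fun y _ => by ring
      rw [h5, h3]
      push_cast
      field_simp
    have h6 : Tendsto (fun N : ℕ => ∑ y, (L y : ℂ) * ((((V ^ N) y x : ℝ) : ℂ) / (lam : ℂ) ^ N))
        atTop (nhds (L x : ℂ)) := by
      simp only [h2]; exact tendsto_const_nhds
    have h7 := tendsto_nhds_unique h1 h6
    rw [← h7, hT_def, Finset.sum_mul]
    exact Finset.sum_congr rfl fun y _ => by ring
  have hwu : ∑ i, w i * u i = 1 := by
    have h := congrFun (congrFun hPP' k₀) k₀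
    simpa [Matrix.mul_apply, Matrix.one_apply] using h
  have hTS : T * S = 1 := by
    calc T * S = T * S * ∑ i, w i * u i := by rw [hwu, mul_one]
      _ = ∑ i, (T * w i) * (u i * S) := by
          rw [Finset.mul_sum]
          exact Finset.sum_congr rfl fun i _ => by ring
      _ = ∑ i, (L i : ℂ) * (R i : ℂ) := by
          exact Finset.sum_congr rfl fun i _ => by rw [key2 i, key1 i]
      _ = ((∑ i, L i * R i : ℝ) : ℂ) := by push_cast; rfl
      _ = 1 := by rw [hnorm, Complex.ofReal_one]
  have hc : ∀ y x : E, u y * w x = ((R y * L x : ℝ) : ℂ) := by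
    intro y x
    calc u y * w x = (u y * w x) * (T * S) := by rw [hTS, mul_one]
      _ = (u y * S) * (T * w x) := by ring
      _ = (R y : ℂ) * (L x : ℂ) := by rw [key1, key2]
      _ = ((R y * L x : ℝ) : ℂ) := by push_cast; ring
  have part1 : ∀ x y : E, Tendsto (fun N : ℕ => (V ^ N) y x / lam ^ N) atTop
      (nhds (R y * L x)) := by
    intro x y
    have h := htendC x y
    rw [hc y x] at h
    have h2 := (Complex.continuous_re.tendsto _).comp h
    have h3 : (fun N : ℕ => ((((V ^ N) y x : ℝ) : ℂ) / (lam : ℂ) ^ N).re) =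
        fun N : ℕ => (V ^ N) y x / lam ^ N := by
      funext N
      rw [← Complex.ofReal_pow, ← Complex.ofReal_div, Complex.ofReal_re]
    simp only [Function.comp_def] at h2
    rw [h3] at h2
    simpa using h2
  refine ⟨part1, ?_⟩
  have htr : ∀ N : ℕ, (V ^ N).trace / lam ^ N = ∑ x, (V ^ N) x x / lam ^ N := by
    intro N
    rw [Matrix.trace, Finset.sum_div]
    rfl
  simp only [htr]
  have h := tendsto_finset_sum Finset.univ fun (x : E) _ => part1 x x
  have h2 : ∑ x, R x * L x = 1 := by
    rw [← hnorm]
    exact Finset.sum_congr rfl fun i _ => mul_comm _ _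
  rw [← h2]
  exact h
end

section
/- Let V be a nonnegative matrix on a finite set E with a simple positive strictly dominant eigenvalue λ, right eigenvector R and left eigenvector L with positive entries and ∑ L_i R_i = 1. For each N let X^{(N)} be the process on {0,...,N-1} with law P(X^{(N)}_0=x_0,...,X^{(N)}_{N-1}=x_{N-1}) = ∏_{i=0}^{N-1} V_{x_i,x_{i+1}} / trace(V^N), x_N = x_0. Then for every fixed k and x_0,...,x_k ∈ E, lim_{N→∞} P(X^{(N)}_0=x_0,...,X^{(N)}_k=x_k) = L_{x_0}·R_{x_k}·∏_{i=0}^{k-1} V_{x_i,x_{i+1}} / λ^k. -/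
open Finset Polynomial Filter
open scoped ENNReal NNReal

lemma my_eval_charpoly {E : Type*} [Fintype E] [DecidableEq E] {K : Type*} [CommRing K]
    (M : Matrix E E K) (x : K) :
    M.charpoly.eval x = (Matrix.diagonal (fun _ => x) - M).det := by
  rw [Matrix.charpoly, ← Polynomial.coe_evalRingHom, RingHom.map_det]
  congr 1
  ext i j
  by_cases h : i = j <;>
    simp [Matrix.charmatrix_apply, Matrix.diagonal, h]

lemma my_mem_spectrum_iff {E : Type*} [Fintype E] [DecidableEq E] {K : Type*} [Field K]
    (M : Matrix E E K) (μ : K) : μ ∈ spectrum K M ↔ M.charpoly.IsRoot μ := by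
  have hd : (algebraMap K (Matrix E E K)) μ = Matrix.diagonal (fun _ => μ) := by
    ext i j
    by_cases h : i = j <;> simp [Matrix.algebraMap_matrix_apply, h]
  rw [spectrum.mem_iff, Matrix.isUnit_iff_isUnit_det, isUnit_iff_ne_zero, not_ne_iff,
    IsRoot, my_eval_charpoly, hd]

lemma my_key_charpoly {E : Type*} [Fintype E] [DecidableEq E]
    (V : Matrix E E ℝ) (lam : ℝ) (R L : E → ℝ)
    (hVP : V * Matrix.of (fun i j => R i * L j) = lam • Matrix.of (fun i j => R i * L j))
    (hnorm : ∑ i, L i * R i = 1) :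
    (X - C lam) * (V - lam • Matrix.of (fun i j => R i * L j)).charpoly
      = X * V.charpoly := by
  set P : Matrix E E ℝ := Matrix.of (fun i j => R i * L j) with hPdef
  have main : ∀ x : ℝ, x ≠ lam →
      ((X - C lam) * (V - lam • P).charpoly - X * V.charpoly).IsRoot x := by
    intro x hx
    have hxl : x - lam ≠ 0 := sub_ne_zero.mpr hx
    set c : ℝ := lam * (x - lam)⁻¹ with hc
    set D : Matrix E E ℝ := Matrix.diagonal (fun _ => x) with hD
    have hD1 : D = x • (1 : Matrix E E ℝ) := by
      rw [Matrix.smul_one_eq_diagonal]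
    have hsm : c • ((x : ℝ) • P - lam • P) = lam • P := by
      rw [smul_sub, smul_smul, smul_smul, ← sub_smul]
      congr 1
      rw [hc, ← mul_sub, mul_assoc, inv_mul_cancel₀ hxl, mul_one]
    have step1 : D - (V - lam • P) = (D - V) * (1 + c • P) := by
      have hDP : D * P = x • P := by
        rw [hD1, Matrix.smul_mul, Matrix.one_mul]
      rw [Matrix.mul_add, Matrix.mul_one, Matrix.mul_smul, Matrix.sub_mul, hDP, hVP, hsm]
      abel
    have hcolrow : c • P = Matrix.replicateCol (Fin 1) (c • R) * Matrix.replicateRow (Fin 1) L := by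
      ext i j
      simp [Matrix.mul_apply, Matrix.replicateCol, Matrix.replicateRow, hPdef]
      ring
    have hdot : dotProduct L (c • R) = c * ∑ i, L i * R i := by
      simp only [dotProduct, Pi.smul_apply, smul_eq_mul, Finset.mul_sum]
      exact Finset.sum_congr rfl fun i _ => by ring
    have step2 : (D - (V - lam • P)).det = (D - V).det * (1 + c) := by
      have h1 : (1 + Matrix.replicateCol (Fin 1) (c • R) * Matrix.replicateRow (Fin 1) L).det
          = 1 + dotProduct L (c • R) :=
        Matrix.det_one_add_replicateCol_mul_replicateRow (ι := Fin 1) (c • R) L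
      rw [step1, Matrix.det_mul, hcolrow, h1, hdot, hnorm, mul_one]
    have key : (x - lam) * (1 + c) = x := by
      rw [hc, mul_add, mul_one, ← mul_assoc, mul_comm (x - lam) lam, mul_assoc, mul_inv_cancel₀ hxl, mul_one]
      ring
    simp only [IsRoot, eval_sub, eval_mul, eval_X, eval_C, my_eval_charpoly, sub_eq_zero]
    calc (x - lam) * (Matrix.diagonal (fun _ => x) - (V - lam • P)).det
        = (x - lam) * ((D - V).det * (1 + c)) := by rw [← step2]
      _ = ((x - lam) * (1 + c)) * (D - V).det := by ring
      _ = x * (Matrix.diagonal (fun _ => x) - V).det := by rw [key]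
  have hinf : {x : ℝ | ((X - C lam) * (V - lam • P).charpoly - X * V.charpoly).IsRoot x}.Infinite := by
    apply Set.Infinite.mono (s := {lam}ᶜ)
    · intro x hx
      exact main x hx
    · exact Set.Finite.infinite_compl (Set.finite_singleton lam)
  exact sub_eq_zero.mp (Polynomial.eq_zero_of_infinite_isRoot _ hinf)

lemma my_pow_div_tendsto_zero {E : Type*} [Fintype E] [DecidableEq E] [Nonempty E]
    (A : Matrix E E ℝ) (lam : ℝ) (hlam : 0 < lam)
    (hroots : ∀ μ : ℂ, ((A.map (algebraMap ℝ ℂ)).charpoly).IsRoot μ → ‖μ‖ < lam)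
    (i j : E) :
    Filter.Tendsto (fun n : ℕ => (A ^ n) i j / lam ^ n) atTop (nhds 0) := by
  letI : NormedRing (Matrix E E ℂ) := Matrix.linftyOpNormedRing
  letI : NormedAlgebra ℂ (Matrix E E ℂ) := Matrix.linftyOpNormedAlgebra
  haveI : CompleteSpace (Matrix E E ℂ) := FiniteDimensional.complete ℂ _
  set B : Matrix E E ℂ := A.map (algebraMap ℝ ℂ) with hB
  have hBpow : ∀ n : ℕ, B ^ n = (A ^ n).map (algebraMap ℝ ℂ) := by
    intro n
    have hBM : B = (algebraMap ℝ ℂ).mapMatrix A := rfl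
    rw [hBM, ← map_pow, RingHom.mapMatrix_apply]
  obtain ⟨z, hz, hzeq⟩ := spectrum.exists_nnnorm_eq_spectralRadius (a := B)
  have hzroot : B.charpoly.IsRoot z := (my_mem_spectrum_iff B z).mp hz
  have hzlt : ‖z‖ < lam := by
    exact hroots z hzroot
  set r : ℝ := (‖z‖ + lam) / 2 with hr
  have hr0 : 0 ≤ r := by positivity
  have hr1 : ‖z‖ < r := by rw [hr]; linarith
  have hr2 : r < lam := by rw [hr]; linarith
  have hrnn : ‖z‖₊ < r.toNNReal := by
    rwa [← NNReal.coe_lt_coe, coe_nnnorm, Real.coe_toNNReal _ hr0]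
  have hsr : spectralRadius ℂ B < (r.toNNReal : ℝ≥0∞) := by
    rw [← hzeq]
    exact_mod_cast hrnn
  have hgel := spectrum.pow_nnnorm_pow_one_div_tendsto_nhds_spectralRadius B
  have hev : ∀ᶠ n : ℕ in atTop,
      (‖B ^ n‖₊ : ℝ≥0∞) ^ (1 / (n : ℝ)) < (r.toNNReal : ℝ≥0∞) :=
    hgel.eventually_lt_const hsr
  have entry : ∀ (M : Matrix E E ℂ) (i j : E), ‖M i j‖₊ ≤ ‖M‖₊ := by
    intro M i j
    rw [Matrix.linfty_opNNNorm_def]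
    calc ‖M i j‖₊ ≤ ∑ l, ‖M i l‖₊ :=
          Finset.single_le_sum (f := fun l => ‖M i l‖₊) (fun _ _ => zero_le)
            (Finset.mem_univ j)
      _ ≤ _ := Finset.le_sup (f := fun i => ∑ l, ‖M i l‖₊) (Finset.mem_univ i)
  have hbound : ∀ᶠ n : ℕ in atTop, ‖(A ^ n) i j / lam ^ n‖ ≤ (r / lam) ^ n := by
    filter_upwards [hev, eventually_ge_atTop 1] with n hn hn1
    have hne : (n : ℝ) ≠ 0 := by positivity
    have h1 : (‖B ^ n‖₊ : ℝ≥0∞) ≤ (r.toNNReal : ℝ≥0∞) ^ (n : ℝ) := by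
      have h2 := ENNReal.rpow_le_rpow hn.le (by positivity : (0:ℝ) ≤ (n:ℝ))
      rwa [← ENNReal.rpow_mul, one_div, inv_mul_cancel₀ hne, ENNReal.rpow_one] at h2
    have h3 : ‖B ^ n‖₊ ≤ r.toNNReal ^ n := by
      have h3' : (‖B ^ n‖₊ : ℝ≥0∞) ≤ ((r.toNNReal ^ n : ℝ≥0) : ℝ≥0∞) := by
        rw [ENNReal.coe_pow, ← ENNReal.rpow_natCast]
        exact h1
      exact_mod_cast h3'
    have h4 : ‖B ^ n‖ ≤ r ^ n := by
      have := (NNReal.coe_le_coe).mpr h3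
      rwa [coe_nnnorm, NNReal.coe_pow, Real.coe_toNNReal _ hr0] at this
    have h5 : |(A ^ n) i j| ≤ ‖B ^ n‖ := by
      have h7 := entry (B ^ n) i j
      have h6 : ‖(B ^ n) i j‖ = |(A ^ n) i j| := by
        rw [hBpow n]
        simp [Matrix.map_apply, Complex.norm_real, Real.norm_eq_abs]
      rw [← h6, ← coe_nnnorm, ← coe_nnnorm]
      exact_mod_cast h7
    have hlamn : (0:ℝ) < lam ^ n := by positivity
    rw [Real.norm_eq_abs, abs_div, abs_pow, abs_of_pos hlam, div_pow,
      div_le_div_iff₀ hlamn hlamn]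
    exact mul_le_mul_of_nonneg_right (h5.trans h4) hlamn.le
  have hg : Filter.Tendsto (fun n : ℕ => (r / lam) ^ n) atTop (nhds 0) := by
    apply tendsto_pow_atTop_nhds_zero_of_lt_one (by positivity)
    rw [div_lt_one hlam]
    exact hr2
  exact squeeze_zero_norm' hbound hg

/-- Convergence of the finite-dimensional laws of the cyclic gas process: for the process
`X^{(N)}` on `{0,…,N−1}` with law `∏ V_{x_i,x_{i+1}} / trace(V^N)` (cyclically, `x_N = x_0`),
for fixed `k` and states `x_0,…,x_k`,
`P(X^{(N)}_0 = x_0,…,X^{(N)}_k = x_k) → L_{x_0}·R_{x_k}·∏_{i<k} V_{x_i,x_{i+1}} / lam^k`. -/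
theorem cyclic_gas_fdd_limit {E : Type*} [Fintype E] [DecidableEq E]
    (V : Matrix E E ℝ) (hV0 : ∀ i j, 0 ≤ V i j)
    (lam : ℝ) (hlam : 0 < lam)
    (R L : E → ℝ) (hRpos : ∀ i, 0 < R i) (hLpos : ∀ i, 0 < L i)
    (hR : V.mulVec R = lam • R) (hL : V.vecMul L = lam • L)
    (hnorm : ∑ i, L i * R i = 1)
    (hsimple : (V.charpoly.map (algebraMap ℝ ℂ)).rootMultiplicity (lam : ℂ) = 1)
    (hdom : ∀ μ : ℂ, (V.charpoly.map (algebraMap ℝ ℂ)).IsRoot μ → μ ≠ (lam : ℂ) →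
      ‖μ‖ < lam)
    (htr : ∀ N : ℕ, 1 ≤ N → 0 < (V ^ N).trace)
    (k : ℕ) (x : ℕ → E) :
    Tendsto
      (fun N : ℕ =>
        (∏ i ∈ Finset.range k, V (x i) (x (i + 1))) * (V ^ (N - k)) (x k) (x 0)
          / (V ^ N).trace)
      atTop
      (nhds (L (x 0) * R (x k) * (∏ i ∈ Finset.range k, V (x i) (x (i + 1))) / lam ^ k)) := by
  have hlam' : lam ≠ 0 := hlam.ne'
  haveI hNE : Nonempty E := by
    rcases isEmpty_or_nonempty E with h | h
    · rw [Finset.univ_eq_empty, Finset.sum_empty] at hnorm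
      norm_num at hnorm
    · exact h
  set P : Matrix E E ℝ := Matrix.of (fun i j => R i * L j) with hPdef
  have hVP : V * P = lam • P := by
    ext i j
    have hmv := congrFun hR i
    simp only [Matrix.mulVec, dotProduct, Pi.smul_apply, smul_eq_mul] at hmv
    simp only [Matrix.mul_apply, Matrix.of_apply, Matrix.smul_apply, smul_eq_mul, hPdef]
    calc ∑ l, V i l * (R l * L j) = (∑ l, V i l * R l) * L j := by
          rw [Finset.sum_mul]
          exact Finset.sum_congr rfl fun l _ => by ring
      _ = lam * (R i * L j) := by rw [hmv]; ring
  have hPV : P * V = lam • P := by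
    ext i j
    have hmv := congrFun hL j
    simp only [Matrix.vecMul, dotProduct, Pi.smul_apply, smul_eq_mul] at hmv
    simp only [Matrix.mul_apply, Matrix.of_apply, Matrix.smul_apply, smul_eq_mul, hPdef]
    calc ∑ l, R i * L l * V l j = R i * ∑ l, L l * V l j := by
          rw [Finset.mul_sum]
          exact Finset.sum_congr rfl fun l _ => by ring
      _ = lam * (R i * L j) := by rw [hmv]; ring
  have hPP : P * P = P := by
    ext i j
    simp only [Matrix.mul_apply, Matrix.of_apply, hPdef]
    calc ∑ l, R i * L l * (R l * L j) = (∑ l, L l * R l) * (R i * L j) := by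
          rw [Finset.sum_mul]
          exact Finset.sum_congr rfl fun l _ => by ring
      _ = R i * L j := by rw [hnorm]; ring
  set A : Matrix E E ℝ := V - lam • P with hAdef
  have hAP : A * P = 0 := by
    rw [hAdef, Matrix.sub_mul, Matrix.smul_mul, hVP, hPP, sub_self]
  have hPA : P * A = 0 := by
    rw [hAdef, Matrix.mul_sub, Matrix.mul_smul, hPV, hPP, sub_self]
  have hAnP : ∀ n : ℕ, 1 ≤ n → A ^ n * P = 0 := by
    intro n hn
    obtain ⟨m, rfl⟩ := Nat.exists_eq_add_of_le hn
    rw [add_comm, pow_succ, Matrix.mul_assoc, hAP, Matrix.mul_zero]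
  have hpow : ∀ n : ℕ, 1 ≤ n → V ^ n = A ^ n + (lam ^ n) • P := by
    intro n hn
    induction n with
    | zero => omega
    | succ m ih =>
      rcases Nat.eq_or_lt_of_le hn with h1 | h1
      · simp only [← h1, pow_one]
        rw [hAdef]
        abel
      · have hm : 1 ≤ m := by omega
        have hVA : V = A + lam • P := by rw [hAdef]; abel
        have h2 : (lam ^ m • P) * V = lam ^ (m + 1) • P := by
          rw [Matrix.smul_mul, hPV, smul_smul, ← pow_succ]
        have h3 : A ^ m * V = A ^ (m + 1) := by
          nth_rewrite 1 [hVA]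
          rw [Matrix.mul_add, Matrix.mul_smul, hAnP m hm, smul_zero, add_zero, ← pow_succ]
        rw [pow_succ, ih hm, Matrix.add_mul, h2, h3]
  -- roots of the charpoly of A over ℂ are all < lam in absolute value
  have hkey := my_key_charpoly V lam R L hVP hnorm
  have hroots : ∀ μ : ℂ, ((A.map (algebraMap ℝ ℂ)).charpoly).IsRoot μ →
      ‖μ‖ < lam := by
    have hcpA : (A.map (algebraMap ℝ ℂ)).charpoly
        = (A.charpoly).map (algebraMap ℝ ℂ) := Matrix.charpoly_map A _
    set a : Polynomial ℂ := (A.charpoly).map (algebraMap ℝ ℂ) with ha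
    set q : Polynomial ℂ := (V.charpoly).map (algebraMap ℝ ℂ) with hq
    have ha0 : a ≠ 0 := ((A.charpoly_monic).map _).ne_zero
    have hq0 : q ≠ 0 := ((V.charpoly_monic).map _).ne_zero
    have hkeyC : (X - C (lam : ℂ)) * a = X * q := by
      have := congrArg (Polynomial.map (algebraMap ℝ ℂ)) hkey
      rwa [Polynomial.map_mul, Polynomial.map_mul, Polynomial.map_sub,
        Polynomial.map_X, Polynomial.map_C] at this
    intro μ hμ
    rw [hcpA] at hμ
    by_cases hmu : μ = (lam : ℂ)
    · exfalso
      have hlamC : (lam : ℂ) ≠ 0 := by exact_mod_cast hlam'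
      have hX0 : rootMultiplicity (lam : ℂ) (X : Polynomial ℂ) = 0 := by
        apply rootMultiplicity_eq_zero
        simp [IsRoot, hlamC]
      have hXC : rootMultiplicity (lam : ℂ) (X - C (lam : ℂ)) = 1 := by
        simpa using rootMultiplicity_X_sub_C_self (x := (lam : ℂ))
      have hL0 : rootMultiplicity (lam : ℂ) ((X - C (lam : ℂ)) * a)
          = 1 + rootMultiplicity (lam : ℂ) a := by
        rw [rootMultiplicity_mul (mul_ne_zero (X_sub_C_ne_zero _) ha0), hXC]
      have hR0 : rootMultiplicity (lam : ℂ) (X * q)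
          = rootMultiplicity (lam : ℂ) q := by
        rw [rootMultiplicity_mul (mul_ne_zero X_ne_zero hq0), hX0, zero_add]
      have hapos : 0 < rootMultiplicity (lam : ℂ) a :=
        (rootMultiplicity_pos ha0).mpr (hmu ▸ hμ)
      rw [hkeyC, hR0, hsimple] at hL0
      omega
    · have hev : ((X - C (lam : ℂ)) * a).eval μ = (X * q).eval μ := by rw [hkeyC]
      have hz : a.eval μ = 0 := hμ
      simp only [eval_mul, eval_sub, eval_X, eval_C, hz, mul_zero] at hev
      rcases mul_eq_zero.mp hev.symm with h0 | hqr
      · simp [h0, hlam]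
      · exact hdom μ hqr hmu
  -- limits
  set c : ℝ := ∏ i ∈ Finset.range k, V (x i) (x (i + 1)) with hc
  set RL : ℝ := R (x k) * L (x 0) with hRL
  have he : Tendsto (fun m : ℕ => (A ^ m) (x k) (x 0) / lam ^ m) atTop (nhds 0) :=
    my_pow_div_tendsto_zero A lam hlam hroots (x k) (x 0)
  have he' : Tendsto (fun N : ℕ => (A ^ (N - k)) (x k) (x 0) / lam ^ (N - k)) atTop (nhds 0) :=
    he.comp (tendsto_sub_atTop_nat k)
  have ht : Tendsto (fun N : ℕ => (A ^ N).trace / lam ^ N) atTop (nhds 0) := by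
    have : (fun N : ℕ => (A ^ N).trace / lam ^ N)
        = fun N : ℕ => ∑ i, (A ^ N) i i / lam ^ N := by
      funext N
      rw [Matrix.trace, Finset.sum_div]
      rfl
    rw [this]
    have h0 : (0 : ℝ) = ∑ _i : E, (0 : ℝ) := by simp
    rw [h0]
    exact tendsto_finset_sum _ fun i _ => my_pow_div_tendsto_zero A lam hlam hroots i i
  have hnum : Tendsto (fun N : ℕ => c * ((A ^ (N - k)) (x k) (x 0) / lam ^ (N - k) + RL))
      atTop (nhds (c * (0 + RL))) :=
    tendsto_const_nhds.mul (he'.add tendsto_const_nhds)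
  have hden : Tendsto (fun N : ℕ => lam ^ k * ((A ^ N).trace / lam ^ N + 1))
      atTop (nhds (lam ^ k * (0 + 1))) :=
    tendsto_const_nhds.mul (ht.add tendsto_const_nhds)
  have hden0 : lam ^ k * ((0 : ℝ) + 1) ≠ 0 := by
    simp [pow_ne_zero, hlam']
  have hF := hnum.div hden hden0
  have hlimeq : L (x 0) * R (x k) * c / lam ^ k = c * (0 + RL) / (lam ^ k * (0 + 1)) := by
    rw [hRL]; ring
  rw [hlimeq]
  apply hF.congr'
  filter_upwards [eventually_ge_atTop (k + 1)] with N hN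
  show c * ((A ^ (N - k)) (x k) (x 0) / lam ^ (N - k) + RL) / (lam ^ k * ((A ^ N).trace / lam ^ N + 1)) = _
  have hkN : k ≤ N := by omega
  have hm1 : 1 ≤ N - k := by omega
  have hN1 : 1 ≤ N := by omega
  have hVmk : (V ^ (N - k)) (x k) (x 0)
      = (A ^ (N - k)) (x k) (x 0) + lam ^ (N - k) * RL := by
    rw [hpow (N - k) hm1]
    simp [Matrix.add_apply, Matrix.smul_apply, hPdef, hRL]
  have htra : (V ^ N).trace = (A ^ N).trace + lam ^ N := by
    rw [hpow N hN1, Matrix.trace_add, Matrix.trace_smul]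
    congr 1
    rw [Matrix.trace, smul_eq_mul]
    have : ∑ i, P.diag i = 1 := by
      rw [← hnorm]
      exact Finset.sum_congr rfl fun i _ => by rw [Matrix.diag_apply, hPdef]; simp [mul_comm]
    rw [this, mul_one]
  have htrne : (A ^ N).trace + lam ^ N ≠ 0 := by
    rw [← htra]
    exact (htr N hN1).ne'
  have hmk : lam ^ (N - k) * lam ^ k = lam ^ N := by
    rw [← pow_add, Nat.sub_add_cancel hkN]
  rw [hVmk, htra, ← hmk]
  have htrne' : lam ^ (N - k) * lam ^ k + (A ^ N).trace ≠ 0 := by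
    rw [hmk, add_comm]
    exact htrne
  have hpk : lam ^ k ≠ 0 := pow_ne_zero _ hlam'
  have hpm : lam ^ (N - k) ≠ 0 := pow_ne_zero _ hlam'
  have htrne'' : (A ^ N).trace + lam ^ (N - k) * lam ^ k ≠ 0 := by
    rw [add_comm]
    exact htrne'
  field_simp [htrne', htrne'']
end
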